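/- arXiv:2306.06336 — 2 statements merged into one kernel-verified Lean document; each statement's English description precedes it below -/
import Mathlib

section
/- Strong duality for the finite-support moment problem: if there exists at least one primal feasible q, then the supremum of Σ_{a∈A} H(a) q(a) over all primal feasible q equals the infimum of ψ ⬝ μ̄ + φ over all dual feasible pairs (ψ, φ). This is the duality step used to replace the inner worst-case-expectation maximization by its dual feasibility constraints in the single-level reformulation. -/
/-!
Weak duality is the bound `H a ≤ ψ ⬝ g a + φ` averaged against a feasible `q`. For the converse,
the region of pairs `(u, t)` such that some distribution on `A` has moments `≤ u` and expected
cost `≥ t` is convex and closed: it is the image of the compact simplex plus a closed orthant.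
If `t` exceeds the primal supremum, `(μ, t)` lies outside the region, and a hyperplane
separating them has nonpositive moment coefficients and a positive cost coefficient, the latter
because the region meets the vertical line through `μ` (primal feasibility). Normalising the
cost coefficient to `1` turns the hyperplane into a dual feasible pair of value `< t`.
-/

open Finset Pointwise

namespace MomentProblem

variable {ι : Type*}

theorem linearMap_apply_eq_sum_add [Fintype ι] [DecidableEq ι] (f : (ι → ℝ) × ℝ →ₗ[ℝ] ℝ)
    (u : ι → ℝ) (t : ℝ) :
    f (u, t) = ∑ i, u i * f (Pi.single i 1, 0) + t * f (0, 1) := by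
  have hsplit : ((u, t) : (ι → ℝ) × ℝ) = (u, 0) + t • (0, 1) := by simp
  rw [hsplit, map_add, map_smul, smul_eq_mul, mul_comm t]
  congr 1
  have hbasis :
      ((u, 0) : (ι → ℝ) × ℝ) = ∑ i, u i • ((Pi.single i 1, 0) : (ι → ℝ) × ℝ) := by
    ext j <;> simp [Prod.fst_sum, Prod.snd_sum, Pi.single_apply]
  simp only [hbasis, map_sum, map_smul, smul_eq_mul]

theorem nonpos_of_forall_add_mul_lt {x y s : ℝ} (h : ∀ c : ℝ, 0 ≤ c → x + c * y < s) :
    y ≤ 0 := by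
  by_contra! hy
  have hxs : x < s := by simpa using h 0 le_rfl
  have := h ((s - x) / y) (div_nonneg (sub_nonneg.2 hxs.le) hy.le)
  rw [div_mul_cancel₀ _ hy.ne'] at this
  linarith

theorem exists_affine_gt_of_notMem [Fintype ι] {C : Set ((ι → ℝ) × ℝ)}
    (hconv : Convex ℝ C) (hclosed : IsClosed C)
    (hmono : ∀ ⦃u u' : ι → ℝ⦄ ⦃t t' : ℝ⦄, (u, t) ∈ C → u ≤ u' → t' ≤ t → (u', t') ∈ C)
    {μ : ι → ℝ} {t₀ t : ℝ} (h₀ : (μ, t₀) ∈ C) (ht : (μ, t) ∉ C) :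
    ∃ (ψ : ι → ℝ) (φ : ℝ), 0 ≤ ψ ∧ (∀ p ∈ C, p.2 < ∑ i, ψ i * p.1 i + φ) ∧
      ∑ i, ψ i * μ i + φ < t := by
  classical
  obtain ⟨f, s, hC, hst⟩ := geometric_hahn_banach_closed_point hconv hclosed ht
  set α : ι → ℝ := fun i => f (Pi.single i 1, 0)
  set lam := f (0, 1)
  have hf (u : ι → ℝ) (r : ℝ) : f (u, r) = ∑ i, u i * α i + r * lam :=
    linearMap_apply_eq_sum_add (f : (ι → ℝ) × ℝ →ₗ[ℝ] ℝ) u r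
  have hα (i : ι) : α i ≤ 0 := nonpos_of_forall_add_mul_lt fun c hc => by
    have hmem := hC _ (hmono (u' := μ + c • Pi.single i 1) h₀
      (le_add_of_nonneg_right (smul_nonneg hc (Pi.single_nonneg.2 zero_le_one))) le_rfl)
    simpa [hf, add_mul, sum_add_distrib, Pi.single_apply, mul_comm c, add_right_comm]
      using hmem
  have hlam_nonneg : 0 ≤ lam := neg_nonpos.1 <| nonpos_of_forall_add_mul_lt
      (x := ∑ i, μ i * α i + t₀ * lam) (s := s) fun c hc => by
    have hmem := hC _ (hmono h₀ le_rfl (sub_le_self t₀ hc))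
    rw [hf] at hmem
    linarith
  have hlam : 0 < lam := by
    refine hlam_nonneg.lt_of_ne fun hzero => ?_
    have h₀s := hC _ h₀
    rw [hf] at h₀s hst
    rw [← hzero] at h₀s hst
    linarith
  set ψ : ι → ℝ := fun i => -α i / lam
  have hval (u : ι → ℝ) : ∑ i, ψ i * u i + s / lam = (s - ∑ i, u i * α i) / lam := by
    simp only [ψ, div_mul_eq_mul_div, ← sum_div, neg_mul, sum_neg_distrib, mul_comm (α _)]
    ring
  refine ⟨ψ, s / lam, fun i => div_nonneg (neg_nonneg.2 (hα i)) hlam.le, ?_, ?_⟩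
  · rintro ⟨u, r⟩ hp
    have hfp := hC _ hp
    rw [hf] at hfp
    rw [hval, lt_div_iff₀ hlam]
    linarith
  · rw [hf] at hst
    rw [hval, div_lt_iff₀ hlam]
    linarith

variable {A : Type*} [Fintype A] (g : A → ι → ℝ) (H : A → ℝ)

def momentCost : (A → ℝ) →ₗ[ℝ] (ι → ℝ) × ℝ where
  toFun q := (fun i => ∑ a, q a * g a i, ∑ a, H a * q a)
  map_add' x y := by ext <;> simp [add_mul, mul_add, sum_add_distrib]
  map_smul' c x := by ext <;> simp [mul_sum, mul_assoc, mul_left_comm]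

def achievableRegion : Set ((ι → ℝ) × ℝ) :=
  momentCost g H '' stdSimplex ℝ A + Set.Ici 0 ×ˢ Set.Iic 0

variable {g H}

theorem mem_achievableRegion {u : ι → ℝ} {t : ℝ} :
    (u, t) ∈ achievableRegion g H ↔
      ∃ q ∈ stdSimplex ℝ A, (∀ i, ∑ a, q a * g a i ≤ u i) ∧ t ≤ ∑ a, H a * q a := by
  constructor
  · rintro ⟨_, ⟨q, hq, rfl⟩, k, ⟨hk₁, hk₂⟩, hsum⟩
    simp only [momentCost, LinearMap.coe_mk, AddHom.coe_mk, Prod.ext_iff, Prod.fst_add,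
      Prod.snd_add, funext_iff, Pi.add_apply] at hsum
    refine ⟨q, hq, fun i => ?_, ?_⟩
    · linarith [hsum.1 i, show 0 ≤ k.1 i from hk₁ i]
    · linarith [hsum.2, show k.2 ≤ 0 from hk₂]
  · rintro ⟨q, hq, hmom, hcost⟩
    refine ⟨_, ⟨q, hq, rfl⟩, (u - fun i => ∑ a, q a * g a i, t - ∑ a, H a * q a),
      ⟨fun i => sub_nonneg.2 (hmom i), sub_nonpos.2 hcost⟩, ?_⟩
    ext <;> simp [momentCost]

theorem convex_achievableRegion : Convex ℝ (achievableRegion g H) :=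
  ((convex_stdSimplex ℝ A).linear_image _).add ((convex_Ici 0).prod (convex_Iic 0))

theorem isClosed_achievableRegion : IsClosed (achievableRegion g H) :=
  (isClosed_Ici.prod isClosed_Iic).add_left_of_isCompact
    ((isCompact_stdSimplex ℝ A).image (momentCost g H).continuous_of_finiteDimensional)

theorem achievableRegion_mono ⦃u u' : ι → ℝ⦄ ⦃t t' : ℝ⦄
    (h : (u, t) ∈ achievableRegion g H) (hu : u ≤ u') (ht : t' ≤ t) :
    (u', t') ∈ achievableRegion g H := by
  obtain ⟨q, hq, hmom, hcost⟩ := mem_achievableRegion.1 h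
  exact mem_achievableRegion.2 ⟨q, hq, fun i => (hmom i).trans (hu i), ht.trans hcost⟩

variable (g H) [Fintype ι]

def primalValues (μ : ι → ℝ) : Set ℝ :=
  {v | ∃ q : A → ℝ, (∀ a, 0 ≤ q a) ∧ (∑ a, q a = 1) ∧
    (∀ i, ∑ a, q a * g a i ≤ μ i) ∧ v = ∑ a, H a * q a}

def dualValues (μ : ι → ℝ) : Set ℝ :=
  {v | ∃ (ψ : ι → ℝ) (φ : ℝ), (∀ i, 0 ≤ ψ i) ∧
    (∀ a, H a ≤ (∑ i, ψ i * g a i) + φ) ∧ v = (∑ i, ψ i * μ i) + φ}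

variable {g H} {μ : ι → ℝ}

theorem primalValue_le_dualValue {p d : ℝ} (hp : p ∈ primalValues g H μ)
    (hd : d ∈ dualValues g H μ) : p ≤ d := by
  obtain ⟨q, hq, hqsum, hmom, rfl⟩ := hp
  obtain ⟨ψ, φ, hψ, hdual, rfl⟩ := hd
  calc ∑ a, H a * q a ≤ ∑ a, (∑ i, ψ i * g a i + φ) * q a :=
        sum_le_sum fun a _ => mul_le_mul_of_nonneg_right (hdual a) (hq a)
    _ = ∑ i, ψ i * ∑ a, q a * g a i + φ := by
        simp only [add_mul, sum_add_distrib, sum_mul, mul_sum]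
        rw [sum_comm, ← mul_sum, hqsum, mul_one]
        congr! 3
        ring
    _ ≤ ∑ i, ψ i * μ i + φ := by
        gcongr with i
        exacts [hψ i, hmom i]

theorem dualValues_nonempty : (dualValues g H μ).Nonempty := by
  refine ⟨_, 0, ∑ a, |H a|, fun _ => le_rfl, fun a => ?_, rfl⟩
  simpa using (le_abs_self (H a)).trans
    (single_le_sum (fun b _ => abs_nonneg (H b)) (mem_univ a))

theorem bddAbove_primalValues : BddAbove (primalValues g H μ) :=
  let ⟨d, hd⟩ := dualValues_nonempty (g := g) (H := H) (μ := μ)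
  ⟨d, fun _ hp => primalValue_le_dualValue hp hd⟩

theorem bddBelow_dualValues (hP : (primalValues g H μ).Nonempty) :
    BddBelow (dualValues g H μ) :=
  let ⟨p, hp⟩ := hP
  ⟨p, fun _ hd => primalValue_le_dualValue hp hd⟩

theorem exists_dualValue_lt (hP : (primalValues g H μ).Nonempty) {t : ℝ}
    (ht : sSup (primalValues g H μ) < t) : ∃ d ∈ dualValues g H μ, d < t := by
  classical
  obtain ⟨_, q₀, hq₀, hq₀sum, hq₀mom, rfl⟩ := hP
  have h₀ : (μ, ∑ a, H a * q₀ a) ∈ achievableRegion g H :=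
    mem_achievableRegion.2 ⟨q₀, ⟨hq₀, hq₀sum⟩, hq₀mom, le_rfl⟩
  have hμt : (μ, t) ∉ achievableRegion g H := by
    rintro hmem
    obtain ⟨q, ⟨hq, hqsum⟩, hmom, hcost⟩ := mem_achievableRegion.1 hmem
    exact (hcost.trans (le_csSup bddAbove_primalValues ⟨q, hq, hqsum, hmom, rfl⟩)).not_gt ht
  obtain ⟨ψ, φ, hψ, hsep, hval⟩ := exists_affine_gt_of_notMem convex_achievableRegion
    isClosed_achievableRegion achievableRegion_mono h₀ hμt
  refine ⟨_, ⟨ψ, φ, hψ, fun a => (hsep (g a, H a) ?_).le, rfl⟩, hval⟩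
  refine mem_achievableRegion.2 ⟨Pi.single a 1, single_mem_stdSimplex ℝ a, fun i => ?_, ?_⟩ <;>
    simp [Pi.single_apply]

end MomentProblem

open MomentProblem

theorem strong_duality_moment_problem_general
    {A : Type*} [Fintype A] {n : ℕ}
    (g : A → Fin n → ℝ) (H : A → ℝ) (μ : Fin n → ℝ)
    (hfeas : ∃ q : A → ℝ, (∀ a, 0 ≤ q a) ∧ (∑ a, q a = 1) ∧
      (∀ i, ∑ a, q a * g a i ≤ μ i)) :
    sSup {v : ℝ | ∃ q : A → ℝ, (∀ a, 0 ≤ q a) ∧ (∑ a, q a = 1) ∧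
        (∀ i, ∑ a, q a * g a i ≤ μ i) ∧ v = ∑ a, H a * q a} =
    sInf {v : ℝ | ∃ (ψ : Fin n → ℝ) (φ : ℝ), (∀ i, 0 ≤ ψ i) ∧
        (∀ a, H a ≤ (∑ i, ψ i * g a i) + φ) ∧ v = (∑ i, ψ i * μ i) + φ} := by
  change sSup (primalValues g H μ) = sInf (dualValues g H μ)
  obtain ⟨q₀, hq₀, hq₀sum, hq₀mom⟩ := hfeas
  have hP : (primalValues g H μ).Nonempty := ⟨_, q₀, hq₀, hq₀sum, hq₀mom, rfl⟩
  refine le_antisymm (le_csInf dualValues_nonempty fun d hd =>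
    csSup_le hP fun p hp => primalValue_le_dualValue hp hd) ?_
  refine le_of_forall_gt_imp_ge_of_dense fun t ht => ?_
  obtain ⟨d, hd, hdt⟩ := exists_dualValue_lt hP ht
  exact (csInf_le (bddBelow_dualValues hP) hd).trans hdt.le

/-- Strong duality for the finite-support moment problem: if there exists a primal
feasible `q`, then the supremum of `Σ_a H a * q a` over primal feasible `q` equals the
infimum of `ψ ⬝ μ̄ + φ` over dual feasible pairs `(ψ, φ)`. -/
theorem strong_duality_moment_problem
    {A : Type*} [Fintype A] [Nonempty A] {n : ℕ}
    (g : A → Fin n → ℝ) (H : A → ℝ) (μ : Fin n → ℝ)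
    (hfeas : ∃ q : A → ℝ, (∀ a, 0 ≤ q a) ∧ (∑ a, q a = 1) ∧
      (∀ i, ∑ a, q a * g a i ≤ μ i)) :
    sSup {v : ℝ | ∃ q : A → ℝ, (∀ a, 0 ≤ q a) ∧ (∑ a, q a = 1) ∧
        (∀ i, ∑ a, q a * g a i ≤ μ i) ∧ v = ∑ a, H a * q a} =
    sInf {v : ℝ | ∃ (ψ : Fin n → ℝ) (φ : ℝ), (∀ i, 0 ≤ ψ i) ∧
        (∀ a, H a ≤ (∑ i, ψ i * g a i) + φ) ∧ v = (∑ i, ψ i * μ i) + φ} :=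
  strong_duality_moment_problem_general g H μ hfeas
end

section
/- Single-level reformulation of the two-stage distributionally robust problem: let A be a nonempty finite set, g : A → ℝ^n, let X be a nonempty set of first-stage decisions, c : X → ℝ a first-stage cost, μ̄ : X → ℝ^n a (decision-dependent) moment bound, and H : X × A → ℝ the second-stage cost. Assume for each x ∈ X the inner primal problem is feasible (there exists a probability vector q on A with Σ_a q(a) g(a) ≤ μ̄(x)). Then inf_{x∈X} [ c(x) + sup { Σ_{a∈A} H(x,a) q(a) : q ≥ 0, Σ_a q(a) = 1, Σ_a q(a) g(a) ≤ μ̄(x) } ] equals inf { c(x) + ψ ⬝ μ̄(x) + φ : x ∈ X, ψ ∈ ℝ^n with ψ ≥ 0, φ ∈ ℝ, and ψ ⬝ g(a) + φ ≥ H(x,a) for all a ∈ A }. -/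
/-!
Fix a decision `x` and write `h = H x`, `m = μ x`. The inner problem is a linear program over the
probability simplex, and every dual-feasible `(ψ, φ)` bounds it from above by `ψ ⬝ᵥ m + φ` (weak
duality). Conversely, if no feasible `q` reaches the level `r`, then the compact convex set of
vectors `(h ⬝ᵥ q - r, (m i - ∑ a, q a * g a i)ᵢ)`, `q` in the simplex, misses the nonnegative
orthant, so some nonnegative functional `(τ, ψ)` is negative on it; a feasible `q` forces `τ > 0`,
and `(ψ / τ, r - ψ ⬝ᵥ m / τ)` is dual feasible with value `r`. So the duality gap vanishes for
every decision, and the two outer infima agree.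
-/

open Finset

theorem exists_nonneg_dotProduct_neg_of_forall_not_nonneg {A κ : Type*} [Fintype A] [Fintype κ]
    (v : A → κ → ℝ) (hv : ∀ q ∈ stdSimplex ℝ A, ¬0 ≤ ∑ a, q a • v a) :
    ∃ w : κ → ℝ, 0 ≤ w ∧ ∀ q ∈ stdSimplex ℝ A, w ⬝ᵥ ∑ a, q a • v a < 0 := by
  classical
  set L := Fintype.linearCombination ℝ v
  obtain ⟨f, hf_nonneg, hf_neg⟩ := (ProperCone.positive ℝ (κ → ℝ)).hyperplane_separation
    ((convex_stdSimplex ℝ A).linear_image L)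
    ((isCompact_stdSimplex ℝ A).image L.continuous_of_finiteDimensional)
    (Set.disjoint_left.2 <| by rintro _ ⟨q, hq, rfl⟩; exact hv q hq)
  set w : κ → ℝ := fun k => f (Pi.single k 1)
  have hf : ∀ z, f z = w ⬝ᵥ z := fun z => by
    have hsingle : ∀ k : κ, (fun j => if k = j then (1 : ℝ) else 0) = Pi.single k 1 := fun k => by
      ext j; simp only [Pi.single_apply, eq_comm]
    simpa [dotProduct, w, mul_comm, hsingle] using f.toLinearMap.pi_apply_eq_sum_univ z
  refine ⟨w, fun k => hf_nonneg _ ?_, fun q hq => ?_⟩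
  · simp [Pi.single_nonneg]
  · rw [← hf]
    exact hf_neg _ ⟨q, hq, rfl⟩

theorem csInf_eq_csInf_of_forall_exists_le_add {S T : Set ℝ}
    (hT : ∀ t ∈ T, ∃ s ∈ S, s ≤ t) (hS : ∀ s ∈ S, ∀ ε > 0, ∃ t ∈ T, t ≤ s + ε) :
    sInf S = sInf T := by
  rcases S.eq_empty_or_nonempty with rfl | hS_ne
  · have : T = ∅ := Set.eq_empty_of_forall_notMem fun t ht => by simpa using hT t ht
    rw [this]
  obtain ⟨t₀, ht₀, -⟩ := hS _ hS_ne.some_mem 1 one_pos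
  by_cases hS_bdd : BddBelow S
  · have hT_bdd : BddBelow T := by
      obtain ⟨b, hb⟩ := hS_bdd
      exact ⟨b, fun t ht => by obtain ⟨s, hs, hst⟩ := hT t ht; exact (hb hs).trans hst⟩
    refine le_antisymm (le_csInf ⟨t₀, ht₀⟩ fun t ht => ?_) (le_csInf hS_ne fun s hs => ?_)
    · obtain ⟨s, hs, hst⟩ := hT t ht
      exact (csInf_le hS_bdd hs).trans hst
    · refine le_of_forall_pos_le_add fun ε hε => ?_
      obtain ⟨t, ht, hts⟩ := hS s hs ε hε
      exact (csInf_le hT_bdd ht).trans hts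
  · have hT_bdd : ¬BddBelow T := by
      rintro ⟨b, hb⟩
      refine hS_bdd ⟨b - 1, fun s hs => ?_⟩
      obtain ⟨t, ht, hts⟩ := hS s hs 1 one_pos
      linarith [hb ht]
    rw [Real.sInf_of_not_bddBelow hS_bdd, Real.sInf_of_not_bddBelow hT_bdd]

section MomentProblem

variable {A ι : Type*} [Fintype A] [Fintype ι]

def IsPrimalFeasible (g : A → ι → ℝ) (m : ι → ℝ) (q : A → ℝ) : Prop :=
  q ∈ stdSimplex ℝ A ∧ ∀ i, ∑ a, q a * g a i ≤ m i

def IsDualFeasible (g : A → ι → ℝ) (h : A → ℝ) (ψ : ι → ℝ) (φ : ℝ) : Prop :=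
  0 ≤ ψ ∧ ∀ a, h a ≤ ψ ⬝ᵥ g a + φ

def primalValues (g : A → ι → ℝ) (m : ι → ℝ) (h : A → ℝ) : Set ℝ :=
  {w | ∃ q : A → ℝ, (∀ a, 0 ≤ q a) ∧ (∑ a, q a = 1) ∧ (∀ i, ∑ a, q a * g a i ≤ m i) ∧
    w = ∑ a, h a * q a}

variable {g : A → ι → ℝ} {m : ι → ℝ} {h : A → ℝ} {q : A → ℝ} {ψ : ι → ℝ} {φ : ℝ}

theorem IsPrimalFeasible.dotProduct_le (hq : IsPrimalFeasible g m q)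
    (hd : IsDualFeasible g h ψ φ) : h ⬝ᵥ q ≤ ψ ⬝ᵥ m + φ := by
  obtain ⟨⟨hq_nonneg, hq_sum⟩, hq_le⟩ := hq
  calc h ⬝ᵥ q ≤ ∑ a, (ψ ⬝ᵥ g a + φ) * q a :=
        sum_le_sum fun a _ => mul_le_mul_of_nonneg_right (hd.2 a) (hq_nonneg a)
    _ = ∑ i, ψ i * ∑ a, q a * g a i + φ := by
        simp only [add_mul, sum_add_distrib, ← mul_sum, hq_sum, mul_one]
        simp only [dotProduct, sum_mul, mul_sum]
        rw [sum_comm]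
        congr 1
        exact sum_congr rfl fun i _ => sum_congr rfl fun a _ => by ring
    _ ≤ ψ ⬝ᵥ m + φ := by
        unfold dotProduct
        gcongr with i
        exacts [hd.1 i, hq_le i]

theorem bddAbove_primalValues : BddAbove (primalValues g m h) := by
  obtain ⟨M, hM⟩ := (Set.finite_range h).bddAbove
  refine ⟨M, ?_⟩
  rintro _ ⟨q, hq_nonneg, hq_sum, hq_le, rfl⟩
  exact (IsPrimalFeasible.dotProduct_le (ψ := 0) ⟨⟨hq_nonneg, hq_sum⟩, hq_le⟩
    ⟨le_rfl, fun a => by simpa using hM ⟨a, rfl⟩⟩).trans_eq (by simp)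

theorem IsPrimalFeasible.dotProduct_le_csSup (hq : IsPrimalFeasible g m q) :
    h ⬝ᵥ q ≤ sSup (primalValues g m h) :=
  le_csSup bddAbove_primalValues ⟨q, hq.1.1, hq.1.2, hq.2, rfl⟩

theorem csSup_primalValues_le (hq : IsPrimalFeasible g m q) (hd : IsDualFeasible g h ψ φ) :
    sSup (primalValues g m h) ≤ ψ ⬝ᵥ m + φ := by
  refine csSup_le ⟨_, q, hq.1.1, hq.1.2, hq.2, rfl⟩ ?_
  rintro _ ⟨q, hq_nonneg, hq_sum, hq_le, rfl⟩
  exact IsPrimalFeasible.dotProduct_le ⟨⟨hq_nonneg, hq_sum⟩, hq_le⟩ hd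

theorem exists_multipliers_of_forall_lt {r : ℝ}
    (hr : ∀ q, IsPrimalFeasible g m q → h ⬝ᵥ q < r) :
    ∃ (τ : ℝ) (ψ : ι → ℝ), 0 ≤ τ ∧ 0 ≤ ψ ∧ ∀ q ∈ stdSimplex ℝ A,
      τ * (h ⬝ᵥ q - r) + ∑ i, ψ i * (m i - ∑ a, q a * g a i) < 0 := by
  classical
  let v : A → Option ι → ℝ := fun a o => o.elim (h a - r) fun i => m i - g a i
  have hv : ∀ q ∈ stdSimplex ℝ A, ∑ a, q a • v a =
      fun o => o.elim (h ⬝ᵥ q - r) fun i => m i - ∑ a, q a * g a i := by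
    intro q hq
    funext o
    cases o <;> simp [v, Finset.sum_apply, mul_sub, sum_sub_distrib, ← mul_sum, hq.2,
      dotProduct, mul_comm]
  obtain ⟨w, hw_nonneg, hw⟩ := exists_nonneg_dotProduct_neg_of_forall_not_nonneg v <| by
    intro q hq hnonneg
    rw [hv q hq] at hnonneg
    have hfeas : IsPrimalFeasible g m q := ⟨hq, fun i => sub_nonneg.1 (hnonneg (some i))⟩
    linarith [hr q hfeas, sub_nonneg.1 (hnonneg none)]
  refine ⟨w none, fun i => w (some i), hw_nonneg none, fun i => hw_nonneg (some i),
    fun q hq => ?_⟩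
  have hwq := hw q hq
  rw [hv q hq] at hwq
  simpa [dotProduct, Fintype.sum_option] using hwq

theorem IsPrimalFeasible.exists_isDualFeasible_le_of_forall_lt {r : ℝ}
    (hq : IsPrimalFeasible g m q) (hr : ∀ q', IsPrimalFeasible g m q' → h ⬝ᵥ q' < r) :
    ∃ ψ φ, IsDualFeasible g h ψ φ ∧ ψ ⬝ᵥ m + φ ≤ r := by
  classical
  obtain ⟨τ, ψ, hτ_nonneg, hψ, hτψ⟩ := exists_multipliers_of_forall_lt hr
  have hτ : 0 < τ := by
    refine hτ_nonneg.lt_of_ne fun hτ₀ => ?_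
    have h_slack : 0 ≤ ∑ i, ψ i * (m i - ∑ a, q a * g a i) :=
      sum_nonneg fun i _ => mul_nonneg (hψ i) (sub_nonneg.2 (hq.2 i))
    linarith [hτψ q hq.1, show τ * (h ⬝ᵥ q - r) = 0 by rw [← hτ₀, zero_mul]]
  refine ⟨τ⁻¹ • ψ, r - τ⁻¹ * (ψ ⬝ᵥ m),
    ⟨smul_nonneg (inv_nonneg.2 hτ.le) hψ, fun a => ?_⟩, by simp⟩
  have h_vertex := hτψ (Pi.single a 1) (single_mem_stdSimplex ℝ a)
  simp only [dotProduct_single, mul_one, mul_sub, Pi.single_apply, ite_mul, one_mul, zero_mul,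
    sum_ite_eq', mem_univ, ↓reduceIte, sum_sub_distrib] at h_vertex
  have h_scaled : h a - r ≤ τ⁻¹ * (ψ ⬝ᵥ g a - ψ ⬝ᵥ m) := by
    rw [le_inv_mul_iff₀ hτ]
    simp only [dotProduct]
    linarith
  rw [smul_dotProduct, smul_eq_mul]
  linarith [mul_sub τ⁻¹ (ψ ⬝ᵥ g a) (ψ ⬝ᵥ m)]

end MomentProblem

theorem single_level_reformulation_general
    {A : Type*} [Fintype A] {X : Type*} {n : ℕ}
    (g : A → Fin n → ℝ) (c : X → ℝ) (μ : X → Fin n → ℝ) (H : X → A → ℝ)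
    (hfeas : ∀ x : X, ∃ q : A → ℝ, (∀ a, 0 ≤ q a) ∧ (∑ a, q a = 1) ∧
      (∀ i, ∑ a, q a * g a i ≤ μ x i)) :
    sInf {v : ℝ | ∃ x : X, v = c x +
        sSup {w : ℝ | ∃ q : A → ℝ, (∀ a, 0 ≤ q a) ∧ (∑ a, q a = 1) ∧
          (∀ i, ∑ a, q a * g a i ≤ μ x i) ∧ w = ∑ a, H x a * q a}} =
    sInf {v : ℝ | ∃ (x : X) (ψ : Fin n → ℝ) (φ : ℝ), (∀ i, 0 ≤ ψ i) ∧
        (∀ a, H x a ≤ (∑ i, ψ i * g a i) + φ) ∧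
        v = c x + (∑ i, ψ i * μ x i) + φ} := by
  have hfeas' : ∀ x, ∃ q, IsPrimalFeasible g (μ x) q := fun x =>
    (hfeas x).imp fun _ hq => ⟨⟨hq.1, hq.2.1⟩, hq.2.2⟩
  change sInf {v | ∃ x, v = c x + sSup (primalValues g (μ x) (H x))} = _
  refine csInf_eq_csInf_of_forall_exists_le_add ?_ ?_
  · rintro _ ⟨x, ψ, φ, hψ, hd, rfl⟩
    obtain ⟨q, hq⟩ := hfeas' x
    have h_sup := csSup_primalValues_le hq ⟨hψ, hd⟩
    unfold dotProduct at h_sup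
    exact ⟨_, ⟨x, rfl⟩, by linarith⟩
  · rintro _ ⟨x, rfl⟩ ε hε
    obtain ⟨q, hq⟩ := hfeas' x
    obtain ⟨ψ, φ, ⟨hψ, hd⟩, hle⟩ := hq.exists_isDualFeasible_le_of_forall_lt fun q' hq' =>
      hq'.dotProduct_le_csSup.trans_lt (lt_add_of_pos_right _ hε)
    unfold dotProduct at hle
    exact ⟨_, ⟨x, ψ, φ, hψ, hd, rfl⟩, by linarith⟩

/-- Single-level reformulation of the two-stage distributionally robust problem: if the
inner primal moment problem is feasible for every first-stage decision `x`, then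
`inf_x [c x + sup of the inner worst-case expectation]` equals the infimum of
`c x + ψ ⬝ μ̄ x + φ` over all `x ∈ X`, `ψ ≥ 0`, `φ` satisfying the dual feasibility
constraints `ψ ⬝ g a + φ ≥ H x a` for all `a ∈ A`. -/
theorem single_level_reformulation
    {A : Type*} [Fintype A] [Nonempty A] {X : Type*} [Nonempty X] {n : ℕ}
    (g : A → Fin n → ℝ) (c : X → ℝ) (μ : X → Fin n → ℝ) (H : X → A → ℝ)
    (hfeas : ∀ x : X, ∃ q : A → ℝ, (∀ a, 0 ≤ q a) ∧ (∑ a, q a = 1) ∧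
      (∀ i, ∑ a, q a * g a i ≤ μ x i)) :
    sInf {v : ℝ | ∃ x : X, v = c x +
        sSup {w : ℝ | ∃ q : A → ℝ, (∀ a, 0 ≤ q a) ∧ (∑ a, q a = 1) ∧
          (∀ i, ∑ a, q a * g a i ≤ μ x i) ∧ w = ∑ a, H x a * q a}} =
    sInf {v : ℝ | ∃ (x : X) (ψ : Fin n → ℝ) (φ : ℝ), (∀ i, 0 ≤ ψ i) ∧
        (∀ a, H x a ≤ (∑ i, ψ i * g a i) + φ) ∧
        v = c x + (∑ i, ψ i * μ x i) + φ} :=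
  single_level_reformulation_general g c μ H hfeas
end
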